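/- arXiv:alg-geom/9707006 — 2 statements merged into one kernel-verified Lean document; each statement's English description precedes it below -/
import Mathlib

section
/- Let n ≥ 1, let K be a field of characteristic 0, let s, t, u ∈ K and let (l₁,…,lₙ) ∈ {0,1}ⁿ with l := Σ_{j=1}^n l_j·2^{j−1}. Then ∏_{l'=0}^{2ⁿ−1} ( F(s,t,u,l₁,…,lₙ,l,l²,…,l^{2^{n−1}}) − u^{l'}·(1 + s·Σ_{(p,q)} t^p·(l')^q) ) = 0, where the inner sum ranges over pairs (p,q) with 0 ≤ p, q < 2ⁿ and p + q = 2ⁿ − 1. In other words, the polynomial P evaluated at (s, t, u, F(point)) vanishes at every point of the variety V. -/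
open MvPolynomial

/-- The polynomial `F := (1 + S·∏_{i=1}^n (T^(2^(i-1)) + X_{n+i})) ·
∏_{j=1}^n ((U^(2^(j-1)) - 1)·X_j + 1)` in `ℚ[S,T,U,X₁,…,X_{2n}]`, where the
variables are encoded as `S = X 0`, `T = X 1`, `U = X 2`, `X_{j+1} = X (3 + j)`
for `0 ≤ j < 2n`. -/
noncomputable def Fpoly (n : ℕ) : MvPolynomial ℕ ℚ :=
  (1 + X 0 * ∏ i ∈ Finset.range n, (X 1 ^ 2 ^ i + X (3 + n + i))) *
    ∏ j ∈ Finset.range n, ((X 2 ^ 2 ^ j - 1) * X (3 + j) + 1)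

lemma sum_two_pow (n : ℕ) : ∑ j ∈ Finset.range n, 2 ^ j = 2 ^ n - 1 := by
  induction n with
  | zero => simp
  | succ m ih =>
    rw [Finset.sum_range_succ, ih]
    have := Nat.one_le_two_pow (n := m)
    have : (2:ℕ) ^ (m+1) = 2 ^ m + 2 ^ m := by rw [pow_succ]; omega
    omega

lemma key_prod {R : Type*} [CommRing R] (t L : R) (n : ℕ) :
    ∏ i ∈ Finset.range n, (t ^ 2 ^ i + L ^ 2 ^ i)
      = ∑ p ∈ Finset.range (2 ^ n), t ^ p * L ^ (2 ^ n - 1 - p) := by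
  induction n with
  | zero => simp
  | succ n ih =>
    rw [Finset.prod_range_succ, ih,
      show (2:ℕ) ^ (n+1) = 2 ^ n + 2 ^ n from by rw [pow_succ]; omega,
      Finset.sum_range_add, mul_add, add_comm]
    congr 1
    · rw [Finset.sum_mul]
      apply Finset.sum_congr rfl
      intro p hp
      rw [Finset.mem_range] at hp
      rw [show 2 ^ n + 2 ^ n - 1 - p = 2 ^ n - 1 - p + 2 ^ n from by omega, pow_add]
      ring
    · rw [Finset.sum_mul]
      apply Finset.sum_congr rfl
      intro p hp
      rw [Finset.mem_range] at hp
      rw [show 2 ^ n + 2 ^ n - 1 - (2 ^ n + p) = 2 ^ n - 1 - p from by omega,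
        show 2 ^ n + p = p + 2 ^ n from by omega, pow_add]
      ring

/-- For a field `K` of characteristic 0, `s,t,u ∈ K` and a bit vector `(l₁,…,lₙ)`
with `l = ∑ l_j 2^(j-1)`, the value of `F` at the point `(s,t,u,l₁,…,lₙ,l,l²,…,l^(2^(n-1)))`
of the variety `V` satisfies
`∏_{l'=0}^{2^n-1} (F(point) - u^{l'}·(1 + s·∑_{(p,q)} t^p (l')^q)) = 0`,
i.e. the elimination polynomial `P` evaluated at `(s,t,u,F(point))` vanishes. -/
theorem stmt4 (n : ℕ) (hn : 1 ≤ n) (K : Type*) [Field K] [CharZero K]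
    (s t u : K) (l : ℕ → ℕ) (hl : ∀ j < n, l j ≤ 1) :
    ∏ l' ∈ Finset.range (2 ^ n),
      (aeval (fun k => if k = 0 then s else if k = 1 then t else if k = 2 then u
          else if k < 3 + n then ((l (k - 3) : K))
          else ((∑ j ∈ Finset.range n, l j * 2 ^ j : ℕ) : K) ^ 2 ^ (k - 3 - n))
        (Fpoly n) -
       u ^ l' * (1 + s * ∑ pq ∈ (Finset.range (2 ^ n) ×ˢ Finset.range (2 ^ n)).filter
            (fun pq => pq.1 + pq.2 = 2 ^ n - 1),
          t ^ pq.1 * (l' : K) ^ pq.2)) = 0 := by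
  set L : ℕ := ∑ j ∈ Finset.range n, l j * 2 ^ j with hLdef
  set f : ℕ → K := fun k => if k = 0 then s else if k = 1 then t else if k = 2 then u
          else if k < 3 + n then ((l (k - 3) : K))
          else ((L : K)) ^ 2 ^ (k - 3 - n) with hf
  have hL : L < 2 ^ n := by
    have h1 : L ≤ ∑ j ∈ Finset.range n, 2 ^ j := by
      apply Finset.sum_le_sum
      intro j hj
      rw [Finset.mem_range] at hj
      calc l j * 2 ^ j ≤ 1 * 2 ^ j := Nat.mul_le_mul_right _ (hl j hj)
        _ = 2 ^ j := one_mul _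
    have h2 := sum_two_pow n
    have := Nat.one_le_two_pow (n := n)
    omega
  apply Finset.prod_eq_zero (Finset.mem_range.2 hL)
  have hFa : aeval f (Fpoly n) =
      (1 + s * ∏ i ∈ Finset.range n, (t ^ 2 ^ i + (L : K) ^ 2 ^ i)) *
      ∏ j ∈ Finset.range n, ((u ^ 2 ^ j - 1) * (l j : K) + 1) := by
    have hS : f 0 = s := by simp [hf]
    have hT : f 1 = t := by simp [hf]
    have hU : f 2 = u := by simp [hf]
    have hXj : ∀ j < n, f (3 + j) = (l j : K) := by
      intro j hj
      simp only [hf]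
      rw [if_neg (by omega), if_neg (by omega), if_neg (by omega), if_pos (by omega),
        show 3 + j - 3 = j from by omega]
    have hXi : ∀ i < n, f (3 + n + i) = (L : K) ^ 2 ^ i := by
      intro i hi
      simp only [hf]
      rw [if_neg (by omega), if_neg (by omega), if_neg (by omega), if_neg (by omega),
        show 3 + n + i - 3 - n = i from by omega]
    simp only [Fpoly, map_mul, map_add, map_one, map_prod, map_pow, map_sub, aeval_X]
    rw [hS, hT, hU]
    congr 1
    · congr 1
      congr 1
      apply Finset.prod_congr rfl
      intro i hi
      rw [hXi i (Finset.mem_range.1 hi)]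
    · apply Finset.prod_congr rfl
      intro j hj
      rw [hXj j (Finset.mem_range.1 hj)]
  rw [hFa]
  have hprod2 : ∏ j ∈ Finset.range n, ((u ^ 2 ^ j - 1) * (l j : K) + 1) = u ^ L := by
    rw [hLdef, ← Finset.prod_pow_eq_pow_sum]
    apply Finset.prod_congr rfl
    intro j hj
    rw [Finset.mem_range] at hj
    rcases Nat.le_one_iff_eq_zero_or_eq_one.1 (hl j hj) with h | h <;> rw [h] <;> simp
  have hm := Nat.one_le_two_pow (n := n)
  have hset : (Finset.range (2 ^ n) ×ˢ Finset.range (2 ^ n)).filter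
      (fun pq => pq.1 + pq.2 = 2 ^ n - 1)
      = (Finset.range (2 ^ n)).image (fun p => (p, 2 ^ n - 1 - p)) := by
    ext ⟨p, q⟩
    simp only [Finset.mem_filter, Finset.mem_product, Finset.mem_range, Finset.mem_image,
      Prod.mk.injEq]
    constructor
    · rintro ⟨⟨hp, hq⟩, h⟩
      exact ⟨p, hp, rfl, by omega⟩
    · rintro ⟨a, ha, rfl, rfl⟩
      omega
  have hsum : ∑ pq ∈ (Finset.range (2 ^ n) ×ˢ Finset.range (2 ^ n)).filter
      (fun pq => pq.1 + pq.2 = 2 ^ n - 1), t ^ pq.1 * ((L : ℕ) : K) ^ pq.2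
      = ∑ p ∈ Finset.range (2 ^ n), t ^ p * (L : K) ^ (2 ^ n - 1 - p) := by
    rw [hset, Finset.sum_image]
    intro a _ b _ h
    exact (Prod.mk.injEq _ _ _ _ ▸ h).1
  rw [hsum, key_prod, hprod2]
  ring
end

section
/- Let n ≥ 1 and N ∈ ℕ. Suppose A₁,…,A_N ∈ ℚ[S,T] are polynomials such that each specialization A_j(0,T) ∈ ℚ[T] is a constant polynomial, and suppose there exist polynomials Q₀,…,Q_{2ⁿ−1} ∈ ℚ[Z₁,…,Z_N] such that for every 0 ≤ l < 2ⁿ, Q_l(A₁,…,A_N) equals the negative of the coefficient of the monomial U^l·Y^{2ⁿ−1} in P := ∏_{l'=0}^{2ⁿ−1} (Y − U^{l'}·c_{l'}). Then N ≥ 2ⁿ. -/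
/-!
Send `ℚ[S,T]` to the dual numbers over `ℚ[T]` by `S ↦ ε`, which keeps `f(0,T)` and the
first-order part `∂f/∂S(0,T)`. Elements `a + ε w` with `a ∈ ℚ` and `w` in a subspace `W` form a
subalgebra. Every `A_j` maps into it when `W` is spanned by the `N` first-order parts of the
`A_j`, hence so does every `Q_l(A) = c_l`. But the first-order parts `∑_{p+q=2ⁿ-1} T^p l^q` of
the `c_l` are linearly independent by a Vandermonde argument, whence `2ⁿ ≤ dim W ≤ N`.
-/

open MvPolynomial

/-- The index set of pairs `(p,q)` with `0 ≤ p,q < 2^n` and `p + q = 2^n - 1`. -/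
def pairs (n : ℕ) : Finset (ℕ × ℕ) :=
  (Finset.range (2 ^ n) ×ˢ Finset.range (2 ^ n)).filter
    (fun pq => pq.1 + pq.2 = 2 ^ n - 1)

/-- `c l := 1 + S·∑_{(p,q) ∈ pairs n} T^p·l^q ∈ ℚ[S,T]`, with `S = X 0`, `T = X 1`. -/
noncomputable def c (n l : ℕ) : MvPolynomial (Fin 2) ℚ :=
  1 + X 0 * ∑ pq ∈ pairs n, X 1 ^ pq.1 * C ((l : ℚ) ^ pq.2)

/-- `P := ∏_{l=0}^{2^n-1} (Y - U^l·c_l)`, regarded as a polynomial in `Y` over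
`ℚ[S,T,U]`, the latter being represented as polynomials in `U` over `ℚ[S,T]`. -/
noncomputable def P (n : ℕ) : Polynomial (Polynomial (MvPolynomial (Fin 2) ℚ)) :=
  ∏ l ∈ Finset.range (2 ^ n),
    (Polynomial.X - Polynomial.C (Polynomial.X ^ l * Polynomial.C (c n l)))

open Finset

theorem Polynomial.coeff_sum_X_pow_mul_C {R : Type*} [Semiring R] (s : Finset ℕ) (a : ℕ → R)
    (j : ℕ) : (∑ i ∈ s, X ^ i * C (a i)).coeff j = if j ∈ s then a j else 0 := by
  simp_rw [X_pow_mul_C, C_mul_X_pow_eq_monomial, finsetSum_coeff, coeff_monomial, sum_ite_eq']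

theorem coeff_sum_antidiagonal_X_pow_mul_C_pow {K : Type*} [CommSemiring K] {d j : ℕ}
    (hj : j ≤ d) (a : K) :
    (∑ pq ∈ antidiagonal d, Polynomial.X ^ pq.1 * Polynomial.C (a ^ pq.2)).coeff j
      = a ^ (d - j) := by
  rw [Nat.sum_antidiagonal_eq_sum_range_succ_mk, Polynomial.coeff_sum_X_pow_mul_C,
    if_pos (mem_range_succ_iff.2 hj)]

theorem linearIndependent_sum_antidiagonal_X_pow_mul_C_pow {K : Type*} [Field K] {m : ℕ}
    {v : Fin m → K} (hv : Function.Injective v) :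
    LinearIndependent K fun i =>
      ∑ pq ∈ antidiagonal (m - 1), Polynomial.X ^ pq.1 * Polynomial.C (v i ^ pq.2) := by
  -- reading the coefficients in reverse order gives the rows of the Vandermonde matrix of `v`
  let L : Polynomial K →ₗ[K] Fin m → K :=
    LinearMap.pi fun k : Fin m => Polynomial.lcoeff K (m - 1 - k)
  refine LinearIndependent.of_comp L ?_
  have hL : L ∘ (fun i => ∑ pq ∈ antidiagonal (m - 1),
      Polynomial.X ^ pq.1 * Polynomial.C (v i ^ pq.2)) = Matrix.vandermonde v := by
    ext i k
    simp only [L, Function.comp_apply, LinearMap.pi_apply, Polynomial.lcoeff_apply,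
      Matrix.vandermonde_apply]
    rw [coeff_sum_antidiagonal_X_pow_mul_C_pow (by omega)]
    congr 1
    omega
  rw [hL]
  exact Matrix.linearIndependent_rows_of_det_ne_zero (Matrix.det_vandermonde_ne_zero_iff.2 hv)

namespace DualNumber

variable {R A : Type*} [CommSemiring R] [CommSemiring A] [Algebra R A]

def subalgebraOfSubmodule (W : Submodule R A) : Subalgebra R (DualNumber A) where
  carrier := {x | x.fst ∈ Set.range (algebraMap R A) ∧ x.snd ∈ W}
  one_mem' := ⟨⟨1, map_one _⟩, by simp⟩
  add_mem' := by
    rintro x y ⟨⟨a, ha⟩, hx⟩ ⟨⟨b, hb⟩, hy⟩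
    exact ⟨⟨a + b, by simp [ha, hb]⟩, W.add_mem hx hy⟩
  mul_mem' := by
    rintro x y ⟨⟨a, ha⟩, hx⟩ ⟨⟨b, hb⟩, hy⟩
    refine ⟨⟨a * b, by simp [ha, hb]⟩, ?_⟩
    rw [DualNumber.snd_mul, ← ha, ← hb, ← Algebra.smul_def, mul_comm, ← Algebra.smul_def]
    exact W.add_mem (W.smul_mem a hy) (W.smul_mem b hx)
  algebraMap_mem' r := ⟨⟨r, rfl⟩, by simp [TrivSqZeroExt.algebraMap_eq_inl']⟩

theorem snd_aeval_mem_span {σ : Type*} (x : σ → DualNumber A)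
    (hx : ∀ i, (x i).fst ∈ Set.range (algebraMap R A)) (f : MvPolynomial σ R) :
    (aeval x f).snd ∈ Submodule.span R (Set.range fun i => (x i).snd) := by
  have hx_mem : Set.range x ⊆
      subalgebraOfSubmodule (Submodule.span R (Set.range fun i => (x i).snd)) :=
    Set.range_subset_iff.2 fun i => ⟨hx i, Submodule.subset_span ⟨i, rfl⟩⟩
  have hf : aeval x f ∈ Algebra.adjoin R (Set.range x) := by
    rw [Algebra.adjoin_range_eq_range_aeval]
    exact ⟨f, rfl⟩
  exact (Algebra.adjoin_le hx_mem hf).2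

theorem fst_aeval {σ : Type*} (x : σ → DualNumber A) (f : MvPolynomial σ R) :
    (aeval x f).fst = aeval (fun i => (x i).fst) f :=
  comp_aeval_apply x (TrivSqZeroExt.fstHom R A A) f

end DualNumber

theorem pairs_eq_antidiagonal (n : ℕ) : pairs n = antidiagonal (2 ^ n - 1) := by
  ext ⟨p, q⟩
  simp only [pairs, mem_filter, mem_product, mem_range, HasAntidiagonal.mem_antidiagonal]
  have := Nat.one_le_two_pow (n := n)
  omega

theorem coeff_coeff_P_two_pow_sub_one (n l : ℕ) (hl : l < 2 ^ n) :
    ((P n).coeff (2 ^ n - 1)).coeff l = -c n l := by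
  have hP := Polynomial.prod_X_sub_C_coeff_card_pred (range (2 ^ n))
    (fun l' => Polynomial.X ^ l' * Polynomial.C (c n l')) (by simp)
  rw [card_range] at hP
  rw [P, hP, Polynomial.coeff_neg, Polynomial.coeff_sum_X_pow_mul_C, if_pos (mem_range.2 hl)]

/-- `sJet f = f(0,T) + ε · ∂f/∂S(0,T)`. -/
noncomputable def sJet : MvPolynomial (Fin 2) ℚ →ₐ[ℚ] DualNumber (Polynomial ℚ) :=
  aeval ![DualNumber.eps, TrivSqZeroExt.inl Polynomial.X]

theorem fst_sJet (f : MvPolynomial (Fin 2) ℚ) :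
    (sJet f).fst = aeval ![(0 : Polynomial ℚ), Polynomial.X] f := by
  have h : (fun i => (![DualNumber.eps, TrivSqZeroExt.inl Polynomial.X] i).fst)
      = ![(0 : Polynomial ℚ), Polynomial.X] := by
    ext i : 1
    fin_cases i <;> rfl
  rw [sJet, DualNumber.fst_aeval, h]

theorem snd_sJet_c (n l : ℕ) :
    (sJet (c n l)).snd = ∑ pq ∈ antidiagonal (2 ^ n - 1),
      Polynomial.X ^ pq.1 * Polynomial.C ((l : ℚ) ^ pq.2) := by
  rw [c, map_add, map_one, TrivSqZeroExt.snd_add, TrivSqZeroExt.snd_one, zero_add, map_mul,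
    DualNumber.snd_mul, fst_sJet, fst_sJet, ← pairs_eq_antidiagonal]
  simp [sJet]

theorem stmt10_general (n : ℕ) (N : ℕ)
    (A : Fin N → MvPolynomial (Fin 2) ℚ)
    (hA : ∀ j, ∃ a : ℚ,
      aeval ![(0 : Polynomial ℚ), Polynomial.X] (A j) = Polynomial.C a)
    (Q : Fin (2 ^ n) → MvPolynomial (Fin N) ℚ)
    (hQ : ∀ l : Fin (2 ^ n),
      aeval A (Q l) = -(((P n).coeff (2 ^ n - 1)).coeff (l : ℕ))) :
    2 ^ n ≤ N := by
  classical
  set B : Fin N → Polynomial ℚ := fun j => (sJet (A j)).snd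
  have hA_fst : ∀ j, (sJet (A j)).fst ∈ Set.range (algebraMap ℚ (Polynomial ℚ)) := fun j => by
    obtain ⟨a, ha⟩ := hA j
    exact ⟨a, by rw [fst_sJet, ha, Polynomial.algebraMap_eq]⟩
  have hc_mem : ∀ l : Fin (2 ^ n), (sJet (c n l)).snd ∈ Submodule.span ℚ (Set.range B) := by
    intro l
    have := DualNumber.snd_aeval_mem_span (fun j => sJet (A j)) hA_fst (Q l)
    rwa [← comp_aeval_apply, hQ l, coeff_coeff_P_two_pow_sub_one n l l.isLt, neg_neg] at this
  have hli := linearIndependent_sum_antidiagonal_X_pow_mul_C_pow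
    (v := fun l : Fin (2 ^ n) => ((l : ℕ) : ℚ)) (Nat.cast_injective.comp Fin.val_injective)
  calc 2 ^ n = Fintype.card (Fin (2 ^ n)) := (Fintype.card_fin _).symm
    _ ≤ Fintype.card (Set.range B) := linearIndependent_le_span_aux' _ hli _
        (Set.range_subset_iff.2 fun l => by rw [← snd_sJet_c]; exact hc_mem l)
    _ ≤ N := by simpa using Fintype.card_range_le B

/-- If `A₁,…,A_N ∈ ℚ[S,T]` specialize at `S := 0` to constant polynomials and there
exist `Q₀,…,Q_{2^n-1} ∈ ℚ[Z₁,…,Z_N]` such that `Q_l(A₁,…,A_N)` equals the negative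
of the coefficient of the monomial `U^l·Y^(2^n-1)` in `P`, then `N ≥ 2^n`. -/
theorem stmt10 (n : ℕ) (hn : 1 ≤ n) (N : ℕ)
    (A : Fin N → MvPolynomial (Fin 2) ℚ)
    (hA : ∀ j, ∃ a : ℚ,
      aeval ![(0 : Polynomial ℚ), Polynomial.X] (A j) = Polynomial.C a)
    (Q : Fin (2 ^ n) → MvPolynomial (Fin N) ℚ)
    (hQ : ∀ l : Fin (2 ^ n),
      aeval A (Q l) = -(((P n).coeff (2 ^ n - 1)).coeff (l : ℕ))) :
    2 ^ n ≤ N :=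
  stmt10_general n N A hA Q hQ
end
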